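/- arXiv:1205.3833 — 3 statements merged into one kernel-verified Lean document; each statement's English description precedes it below -/
import Mathlib

section
/- Consider the test space on outcome set X = {a,b,c,x,y,z} with tests {a,x,b}, {b,y,c}, {c,z,a} (the firefly box). The function ε defined by ε(a) = ε(b) = ε(c) = 1/2 and ε(x) = ε(y) = ε(z) = 0 is a probability weight, and it is not a convex combination of dispersion-free (i.e., {0,1}-valued) probability weights. -/
/- The firefly box test space: outcomes a,b,c,x,y,z encoded as 0,1,2,3,4,5 in `Fin 6`,
tests {a,x,b}, {b,y,c}, {c,z,a}. -/
def fireflyTests : Set (Finset (Fin 6)) :=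
  {({0, 3, 1} : Finset (Fin 6)), ({1, 4, 2} : Finset (Fin 6)), ({2, 5, 0} : Finset (Fin 6))}

def IsFireflyWeight (α : Fin 6 → ℝ) : Prop :=
  (∀ x, α x ∈ Set.Icc (0:ℝ) 1) ∧ ∀ E ∈ fireflyTests, ∑ x ∈ E, α x = 1

def DispersionFree (α : Fin 6 → ℝ) : Prop := ∀ x, α x = 0 ∨ α x = 1

/-! Any two of `a, b, c` lie in a common test, so a dispersion-free weight gives value `1` to
at most one of them: `a + b + c ≤ 1`. Averaging preserves this linear bound, whereas `ε` has
`a + b + c = 3/2`. -/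

open Finset

lemma isFireflyWeight_iff (α : Fin 6 → ℝ) :
    IsFireflyWeight α ↔ (∀ x, α x ∈ Set.Icc (0:ℝ) 1) ∧
      α 0 + α 3 + α 1 = 1 ∧ α 1 + α 4 + α 2 = 1 ∧ α 2 + α 5 + α 0 = 1 := by
  simp only [IsFireflyWeight, fireflyTests, Set.forall_mem_insert, Set.mem_singleton_iff,
    forall_eq]
  rw [sum_insert (by decide), sum_insert (by decide), sum_singleton,
    sum_insert (by decide), sum_insert (by decide), sum_singleton,
    sum_insert (by decide), sum_insert (by decide), sum_singleton]
  simp only [add_assoc]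

lemma isFireflyWeight_half_abc : IsFireflyWeight ![1/2, 1/2, 1/2, 0, 0, 0] := by
  refine (isFireflyWeight_iff _).2 ⟨fun x => ?_, ?_⟩
  · fin_cases x <;> norm_num
  · simp only [Matrix.cons_val]; norm_num

lemma DispersionFree.add_add_le_one {α : Fin 6 → ℝ} (hα : IsFireflyWeight α)
    (hdf : DispersionFree α) : α 0 + α 1 + α 2 ≤ 1 := by
  obtain ⟨hbound, hax, hby, hcz⟩ := (isFireflyWeight_iff α).1 hα
  have hx := (hbound 3).1
  have hy := (hbound 4).1
  have hz := (hbound 5).1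
  rcases hdf 0 with ha | ha <;> rcases hdf 1 with hb | hb <;> rcases hdf 2 with hc | hc <;>
    linarith

/-- ε = (1/2,1/2,1/2,0,0,0) is a probability weight on the firefly box,
and it is not a convex combination of dispersion-free probability weights. -/
theorem stmt_2 :
    IsFireflyWeight ![1/2, 1/2, 1/2, 0, 0, 0] ∧
    ¬ ∃ (n : ℕ) (w : Fin n → ℝ) (f : Fin n → (Fin 6 → ℝ)),
        (∀ i, 0 ≤ w i) ∧ (∑ i, w i = 1) ∧
        (∀ i, IsFireflyWeight (f i) ∧ DispersionFree (f i)) ∧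
        (∀ x, (![1/2, 1/2, 1/2, 0, 0, 0] : Fin 6 → ℝ) x = ∑ i, w i * f i x) := by
  refine ⟨isFireflyWeight_half_abc, ?_⟩
  rintro ⟨n, w, f, hw, hsum, hf, heq⟩
  have hupper : ∑ i, w i * (f i 0 + f i 1 + f i 2) ≤ 1 :=
    calc ∑ i, w i * (f i 0 + f i 1 + f i 2) ≤ ∑ i, w i * 1 :=
          sum_le_sum fun i _ => mul_le_mul_of_nonneg_left
            ((hf i).2.add_add_le_one (hf i).1) (hw i)
      _ = 1 := by simpa using hsum
  have hvalue : ∑ i, w i * (f i 0 + f i 1 + f i 2) = 3 / 2 := by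
    simp only [mul_add, sum_add_distrib, ← heq 0, ← heq 1, ← heq 2, Matrix.cons_val]
    norm_num
  linarith
end

section
/- Let ω be a non-signaling probability weight on the product of two finite test spaces A and B. If the marginal ω₂ is an extreme point of the convex set of probability weights on B, then ω is the product weight: ω(x,y) = ω₁(x)·ω₂(y) for all outcomes x, y. -/
/-!
Fix an outcome `x` of `A`. The unnormalised conditional weight `ω(x, ·)` and its complement
`ω₂ - ω(x, ·)` are nonnegative, add up to `ω₂`, and have total mass `ω₁ x` and `1 - ω₁ x` on
every test of `B`. When `0 < ω₁ x < 1`, normalising them exhibits `ω₂` as a proper convex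
combination of two probability weights, so extremality forces `ω(x, ·) / ω₁ x = ω₂`; the cases
`ω₁ x = 0` and `ω₁ x = 1` follow because a nonnegative weight with zero mass on a test vanishes.
-/

open Finset

namespace TestSpace

variable {X : Type*}

def probabilityWeights (M : Set (Finset X)) : Set (X → ℝ) :=
  {β | (∀ y, β y ∈ Set.Icc (0 : ℝ) 1) ∧ ∀ F ∈ M, ∑ y ∈ F, β y = 1}

variable {M : Set (Finset X)}

lemma mem_probabilityWeights_of_nonneg (hcov : ∀ y, ∃ F ∈ M, y ∈ F) {β : X → ℝ}
    (hβ : 0 ≤ β) (hsum : ∀ F ∈ M, ∑ y ∈ F, β y = 1) : β ∈ probabilityWeights M := by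
  refine ⟨fun y => ⟨hβ y, ?_⟩, hsum⟩
  obtain ⟨F, hF, hy⟩ := hcov y
  exact hsum F hF ▸ single_le_sum (fun z _ => hβ z) hy

lemma eq_smul_of_add_eq_of_mem_extremePoints (hcov : ∀ y, ∃ F ∈ M, y ∈ F) {p f g : X → ℝ}
    {a : ℝ} (hp : p ∈ Set.extremePoints ℝ (probabilityWeights M)) (hf : 0 ≤ f) (hg : 0 ≤ g)
    (hfg : f + g = p) (hfa : ∀ F ∈ M, ∑ y ∈ F, f y = a) : f = a • p := by
  have hga : ∀ F ∈ M, ∑ y ∈ F, g y = 1 - a := by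
    intro F hF
    rw [← hp.1.2 F hF, ← hfa F hF, ← hfg]
    simp only [Pi.add_apply, sum_add_distrib, add_sub_cancel_left]
  funext y
  obtain ⟨F, hF, hy⟩ := hcov y
  have ha0 : 0 ≤ a := hfa F hF ▸ sum_nonneg fun z _ => hf z
  have ha1 : a ≤ 1 := sub_nonneg.1 (hga F hF ▸ sum_nonneg fun z _ => hg z)
  rcases ha0.eq_or_lt with rfl | ha0
  · simpa using (sum_eq_zero_iff_of_nonneg fun z _ => hf z).1 (hfa F hF) y hy
  rcases ha1.eq_or_lt with rfl | ha1
  · have hgy : g y = 0 :=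
      (sum_eq_zero_iff_of_nonneg fun z _ => hg z).1 ((hga F hF).trans (sub_self 1)) y hy
    simp [← hfg, hgy]
  have hb : 0 < 1 - a := sub_pos.2 ha1
  have hβ : a⁻¹ • f ∈ probabilityWeights M :=
    mem_probabilityWeights_of_nonneg hcov (smul_nonneg (inv_nonneg.2 ha0.le) hf) fun F hF => by
      simp [← mul_sum, hfa F hF, ha0.ne']
  have hγ : (1 - a)⁻¹ • g ∈ probabilityWeights M :=
    mem_probabilityWeights_of_nonneg hcov (smul_nonneg (inv_nonneg.2 hb.le) hg) fun F hF => by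
      simp [← mul_sum, hga F hF, hb.ne']
  have hseg : p ∈ openSegment ℝ (a⁻¹ • f) ((1 - a)⁻¹ • g) :=
    ⟨a, 1 - a, ha0, hb, add_sub_cancel a 1,
      by rw [smul_inv_smul₀ ha0.ne', smul_inv_smul₀ hb.ne', hfg]⟩
  rw [← hp.2 hβ hγ hseg]
  simp [ha0.ne']

end TestSpace

open TestSpace in
theorem stmt_11_general {XA XB : Type*} (MA : Set (Finset XA)) (MB : Set (Finset XB))
    (hcovA : ∀ x : XA, ∃ E ∈ MA, x ∈ E) (hcovB : ∀ y : XB, ∃ F ∈ MB, y ∈ F)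
    (ω : XA × XB → ℝ) (hrange : ∀ p, ω p ∈ Set.Icc (0:ℝ) 1)
    (ω₁ : XA → ℝ) (ω₂ : XB → ℝ)
    (hω₁ : ∀ F ∈ MB, ∀ x, ∑ y ∈ F, ω (x, y) = ω₁ x)
    (hω₂ : ∀ E ∈ MA, ∀ y, ∑ x ∈ E, ω (x, y) = ω₂ y)
    (hext : ω₂ ∈ Set.extremePoints ℝ
      {β : XB → ℝ | (∀ y, β y ∈ Set.Icc (0:ℝ) 1) ∧ ∀ F ∈ MB, ∑ y ∈ F, β y = 1}) :
    ∀ x y, ω (x, y) = ω₁ x * ω₂ y := by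
  intro x y
  obtain ⟨E, hE, hx⟩ := hcovA x
  have hle : ∀ y', ω (x, y') ≤ ω₂ y' := fun y' =>
    hω₂ E hE y' ▸ single_le_sum (fun x' _ => (hrange (x', y')).1) hx
  have hsplit := eq_smul_of_add_eq_of_mem_extremePoints (f := fun y' => ω (x, y')) hcovB hext
    (fun y' => (hrange (x, y')).1) (sub_nonneg.2 hle) (add_sub_cancel _ ω₂)
    fun F hF => hω₁ F hF x
  exact congrFun hsplit y

/-- if ω is a non-signaling probability weight on the product of two
finite test spaces and the marginal ω₂ is an extreme point of the convex set of
probability weights on B, then ω is the product weight ω(x,y) = ω₁(x)·ω₂(y). -/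
theorem stmt_11 {XA XB : Type*} (MA : Set (Finset XA)) (MB : Set (Finset XB))
    (hMAne : MA.Nonempty) (hMBne : MB.Nonempty)
    (hcovA : ∀ x : XA, ∃ E ∈ MA, x ∈ E) (hcovB : ∀ y : XB, ∃ F ∈ MB, y ∈ F)
    (ω : XA × XB → ℝ) (hrange : ∀ p, ω p ∈ Set.Icc (0:ℝ) 1)
    (hsum : ∀ E ∈ MA, ∀ F ∈ MB, ∑ x ∈ E, ∑ y ∈ F, ω (x, y) = 1)
    (ω₁ : XA → ℝ) (ω₂ : XB → ℝ)
    (hω₁ : ∀ F ∈ MB, ∀ x, ∑ y ∈ F, ω (x, y) = ω₁ x)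
    (hω₂ : ∀ E ∈ MA, ∀ y, ∑ x ∈ E, ω (x, y) = ω₂ y)
    (hext : ω₂ ∈ Set.extremePoints ℝ
      {β : XB → ℝ | (∀ y, β y ∈ Set.Icc (0:ℝ) 1) ∧ ∀ F ∈ MB, ∑ y ∈ F, β y = 1}) :
    ∀ x y, ω (x, y) = ω₁ x * ω₂ y :=
  stmt_11_general MA MB hcovA hcovB ω hrange ω₁ ω₂ hω₁ hω₂ hext
end

section
/- Let ω be a non-signaling probability weight on a product of two finite test spaces, and suppose ω is an extreme point of the set of non-signaling weights and is NOT a product weight (i.e., ω is entangled). Then both marginals ω₁ and ω₂ are mixed (non-extreme) in their respective state spaces. -/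
/-!
If the first marginal `ω₁` is pure, split it along a single outcome `y₀` of `B`:
`ω₁ x = ω (x, y₀) + ∑_{y ∈ F \ {y₀}} ω (x, y)`. Both pieces are non-negative and have constant
total weight `ω₂ y₀`, resp. `1 - ω₂ y₀`, on every test, so after normalisation they are probability
weights exhibiting `ω₁` as a convex combination. Purity forces `ω (·, y₀) = ω₂ y₀ • ω₁`, so `ω` is
the product `ω₁ ⊗ ω₂`, contradicting entanglement; the second marginal is symmetric.
-/

variable {XA XB : Type*}

/-- Probability weights on a test space. -/
def ProbWeights {X : Type*} (M : Set (Finset X)) : Set (X → ℝ) :=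
  {β | (∀ x, β x ∈ Set.Icc (0:ℝ) 1) ∧ ∀ T ∈ M, ∑ x ∈ T, β x = 1}

/-- Non-signaling probability weights on the product of two test spaces. -/
def NSWeights (MA : Set (Finset XA)) (MB : Set (Finset XB)) : Set (XA × XB → ℝ) :=
  {ω | (∀ p, ω p ∈ Set.Icc (0:ℝ) 1) ∧
       (∀ E ∈ MA, ∀ F ∈ MB, ∑ x ∈ E, ∑ y ∈ F, ω (x, y) = 1) ∧
       (∀ F ∈ MB, ∀ F' ∈ MB, ∀ x, ∑ y ∈ F, ω (x, y) = ∑ y ∈ F', ω (x, y)) ∧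
       (∀ E ∈ MA, ∀ E' ∈ MA, ∀ y, ∑ x ∈ E, ω (x, y) = ∑ x ∈ E', ω (x, y))}

namespace ProbWeights

variable {X : Type*} {M : Set (Finset X)}

lemma le_of_forall_sum_eq (hcov : ∀ x, ∃ T ∈ M, x ∈ T) {α : X → ℝ} {t : ℝ}
    (hα : ∀ x, 0 ≤ α x) (hsum : ∀ T ∈ M, ∑ x ∈ T, α x = t) (x : X) : α x ≤ t := by
  obtain ⟨T, hT, hxT⟩ := hcov x
  rw [← hsum T hT]
  exact Finset.single_le_sum (fun y _ => hα y) hxT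

lemma inv_smul_mem (hcov : ∀ x, ∃ T ∈ M, x ∈ T) {α : X → ℝ} {t : ℝ} (ht : 0 < t)
    (hα : ∀ x, 0 ≤ α x) (hsum : ∀ T ∈ M, ∑ x ∈ T, α x = t) : t⁻¹ • α ∈ ProbWeights M := by
  refine ⟨fun x => ⟨by simpa using mul_nonneg (inv_nonneg.2 ht.le) (hα x), ?_⟩, fun T hT => ?_⟩
  · simpa using inv_mul_le_one_of_le₀ (le_of_forall_sum_eq hcov hα hsum x) ht.le
  · simp only [Pi.smul_apply, smul_eq_mul, ← Finset.mul_sum, hsum T hT, inv_mul_cancel₀ ht.ne']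

lemma eq_smul_of_mem_extremePoints (hcov : ∀ x, ∃ T ∈ M, x ∈ T) {β α ρ : X → ℝ} {t : ℝ}
    (hβ : β ∈ Set.extremePoints ℝ (ProbWeights M)) (hα : ∀ x, 0 ≤ α x) (hρ : ∀ x, 0 ≤ ρ x)
    (hαsum : ∀ T ∈ M, ∑ x ∈ T, α x = t) (hρsum : ∀ T ∈ M, ∑ x ∈ T, ρ x = 1 - t)
    (hαρ : α + ρ = β) : α = t • β := by
  by_cases ht0 : t ≤ 0
  · funext x
    have hαx := le_of_forall_sum_eq hcov hα hαsum x
    have ht : t = 0 := by linarith [hα x]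
    simp [ht, le_antisymm (ht ▸ hαx) (hα x)]
  by_cases ht1 : 1 ≤ t
  · funext x
    have hρx := le_of_forall_sum_eq hcov hρ hρsum x
    have ht : t = 1 := by linarith [hρ x]
    have hρ0 : ρ x = 0 := by linarith [hρ x]
    simp [ht, ← hαρ, hρ0]
  have hseg : β ∈ openSegment ℝ (t⁻¹ • α) ((1 - t)⁻¹ • ρ) :=
    ⟨t, 1 - t, by linarith, by linarith, by ring, by
      rw [smul_inv_smul₀ (by linarith), smul_inv_smul₀ (by linarith), hαρ]⟩
  have hscaled : t⁻¹ • α = β :=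
    hβ.2 (inv_smul_mem hcov (by linarith) hα hαsum)
      (inv_smul_mem hcov (by linarith) hρ hρsum) hseg
  rw [← hscaled, smul_inv_smul₀ (by linarith)]

end ProbWeights

namespace NSWeights

variable {MA : Set (Finset XA)} {MB : Set (Finset XB)}

lemma comp_swap {ω : XA × XB → ℝ} (hω : ω ∈ NSWeights MA MB) :
    ω ∘ Prod.swap ∈ NSWeights MB MA :=
  ⟨fun p => hω.1 p.swap, fun F hF E hE => Finset.sum_comm.trans (hω.2.1 E hE F hF),
    fun E hE E' hE' => hω.2.2.2 E hE E' hE', fun F hF F' hF' => hω.2.2.1 F hF F' hF'⟩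

lemma eq_mul_of_mem_extremePoints_left (hcovA : ∀ x : XA, ∃ E ∈ MA, x ∈ E)
    (hcovB : ∀ y : XB, ∃ F ∈ MB, y ∈ F) {ω : XA × XB → ℝ} (hω : ω ∈ NSWeights MA MB)
    {ω₁ : XA → ℝ} {ω₂ : XB → ℝ}
    (hω₁ : ∀ F ∈ MB, ∀ x, ∑ y ∈ F, ω (x, y) = ω₁ x)
    (hω₂ : ∀ E ∈ MA, ∀ y, ∑ x ∈ E, ω (x, y) = ω₂ y)
    (hpure : ω₁ ∈ Set.extremePoints ℝ (ProbWeights MA)) (x : XA) (y₀ : XB) :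
    ω (x, y₀) = ω₁ x * ω₂ y₀ := by
  classical
  obtain ⟨F, hF, hy₀F⟩ := hcovB y₀
  have hnonneg : ∀ p, 0 ≤ ω p := fun p => (hω.1 p).1
  have hrest : ∀ x, ω₁ x - ω (x, y₀) = ∑ y ∈ F.erase y₀, ω (x, y) := fun x => by
    rw [← hω₁ F hF x, ← Finset.add_sum_erase F _ hy₀F, add_sub_cancel_left]
  have hcolumn := ProbWeights.eq_smul_of_mem_extremePoints hcovA hpure
    (α := fun x => ω (x, y₀)) (ρ := fun x => ω₁ x - ω (x, y₀)) (t := ω₂ y₀)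
    (fun x => hnonneg _) (fun x => hrest x ▸ Finset.sum_nonneg fun y _ => hnonneg _)
    (fun E hE => hω₂ E hE y₀)
    (fun E hE => by
      rw [Finset.sum_sub_distrib, hω₂ E hE y₀, ← hω.2.1 E hE F hF]
      simp only [hω₁ F hF])
    (by funext x; simp)
  simpa [mul_comm] using congrFun hcolumn x

end NSWeights

theorem stmt_12_general (MA : Set (Finset XA)) (MB : Set (Finset XB))
    (hcovA : ∀ x : XA, ∃ E ∈ MA, x ∈ E) (hcovB : ∀ y : XB, ∃ F ∈ MB, y ∈ F)
    (ω : XA × XB → ℝ) (hω : ω ∈ NSWeights MA MB)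
    (ω₁ : XA → ℝ) (ω₂ : XB → ℝ)
    (hω₁ : ∀ F ∈ MB, ∀ x, ∑ y ∈ F, ω (x, y) = ω₁ x)
    (hω₂ : ∀ E ∈ MA, ∀ y, ∑ x ∈ E, ω (x, y) = ω₂ y)
    (hentangled : ¬ ∃ (α : XA → ℝ) (β : XB → ℝ), ∀ x y, ω (x, y) = α x * β y) :
    ω₁ ∉ Set.extremePoints ℝ (ProbWeights MA) ∧
    ω₂ ∉ Set.extremePoints ℝ (ProbWeights MB) := by
  refine ⟨fun hpure => hentangled ⟨ω₁, ω₂, ?_⟩, fun hpure => hentangled ⟨ω₁, ω₂, fun x y => ?_⟩⟩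
  · exact NSWeights.eq_mul_of_mem_extremePoints_left hcovA hcovB hω hω₁ hω₂ hpure
  · exact (NSWeights.eq_mul_of_mem_extremePoints_left hcovB hcovA
      (NSWeights.comp_swap hω) (ω₁ := ω₂) (ω₂ := ω₁) hω₂ hω₁ hpure y x).trans (mul_comm _ _)

/-- if an extreme non-signaling weight ω on a product of two finite test
spaces is entangled (not a product weight), then both marginals are mixed, i.e.,
non-extreme in their respective state spaces. -/
theorem stmt_12 (MA : Set (Finset XA)) (MB : Set (Finset XB))
    (hMAne : MA.Nonempty) (hMBne : MB.Nonempty)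
    (hcovA : ∀ x : XA, ∃ E ∈ MA, x ∈ E) (hcovB : ∀ y : XB, ∃ F ∈ MB, y ∈ F)
    (ω : XA × XB → ℝ) (hω : ω ∈ NSWeights MA MB)
    (ω₁ : XA → ℝ) (ω₂ : XB → ℝ)
    (hω₁ : ∀ F ∈ MB, ∀ x, ∑ y ∈ F, ω (x, y) = ω₁ x)
    (hω₂ : ∀ E ∈ MA, ∀ y, ∑ x ∈ E, ω (x, y) = ω₂ y)
    (hext : ω ∈ Set.extremePoints ℝ (NSWeights MA MB))
    (hentangled : ¬ ∃ (α : XA → ℝ) (β : XB → ℝ), ∀ x y, ω (x, y) = α x * β y) :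
    ω₁ ∉ Set.extremePoints ℝ (ProbWeights MA) ∧
    ω₂ ∉ Set.extremePoints ℝ (ProbWeights MB) :=
  stmt_12_general MA MB hcovA hcovB ω hω ω₁ ω₂ hω₁ hω₂ hentangled
end
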